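/- arXiv:2102.04941 — 2 statements merged into one kernel-verified Lean document; each statement's English description precedes it below -/
import Mathlib

section
/- The function ψ̄_{Q̃} is convex on the set {Q : S × S → ℝ | Q_{ij} ≥ 0 for all (i,j) ∈ B and Q_{ij} = 0 for (i,j) ∉ B}. -/
open Finset

/-- Row sum `μ_i(Q) = Σ_{j : (i,j) ∈ B} Q_{ij}` of an edge measure `Q` supported on `B`. -/
noncomputable def rowSum {S : Type} [Fintype S] [DecidableEq S]
    (B : Finset (S × S)) (Q : S × S → ℝ) (i : S) : ℝ :=
  ∑ j ∈ Finset.univ.filter (fun j => (i, j) ∈ B), Q (i, j)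

/-- The shifted edge measure `Q̂_{ij} = (1-κ)·Q̃_{ij} + κ·Q_{ij}`. -/
noncomputable def hatQ {α : Type} (Qt : α → ℝ) (κ : ℝ) (Q : α → ℝ) : α → ℝ :=
  fun e => (1 - κ) * Qt e + κ * Q e

/-- The surrogate penalty function
`ψ̄_{Q̃}(Q) = κ'·( Σ_{(i,j)∈B} Q̂_{ij}·log(Q̂_{ij}/Q̃_{ij}) − Σ_{i∈S} μ̂_i·log(μ̂_i/μ̃_i) )`,
with the convention `0·log(0/b) = 0` (automatic, since `Real.log 0 = 0`). -/
noncomputable def psibar {S : Type} [Fintype S] [DecidableEq S]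
    (B : Finset (S × S)) (Qt : S × S → ℝ) (κ κ' : ℝ) (Q : S × S → ℝ) : ℝ :=
  κ' * ((∑ e ∈ B, hatQ Qt κ Q e * Real.log (hatQ Qt κ Q e / Qt e)) -
        ∑ i : S, rowSum B (hatQ Qt κ Q) i *
          Real.log (rowSum B (hatQ Qt κ Q) i / rowSum B Qt i))

/-!
Writing `μ̂_i log (μ̂_i / μ̃_i) = ∑_j Q̂_{ij} log (μ̂_i / μ̃_i)`, the penalty becomes
`ψ̄(Q) = κ' ∑_{(i,j) ∈ B} x log (x / y)` at `(x, y) = (Q̂_{ij}, Q̃_{ij} μ̂_i / μ̃_i)`, a point depending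
affinely on `Q`. The kernel `(x, y) ↦ x log (x / y)` is jointly convex, being the perspective of the
convex function `t ↦ t log t`, so `ψ̄` is convex.
-/

open Real

lemma mul_log_div_mul_mul (t x y : ℝ) :
    t * x * log (t * x / (t * y)) = t * (x * log (x / y)) := by
  rcases eq_or_ne t 0 with rfl | ht
  · simp
  · rw [mul_div_mul_left _ _ ht]; ring

lemma mul_log_div_mul {x a b : ℝ} (ha : a ≠ 0) (hb : x ≠ 0 → b ≠ 0) :
    x * log (x / (a * b)) = x * log (x / a) - x * log b := by
  rcases eq_or_ne x 0 with rfl | hx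
  · simp
  · rw [log_div hx (mul_ne_zero ha (hb hx)), log_mul ha (hb hx), log_div hx ha]; ring

noncomputable def mulLogDiv (p : ℝ × ℝ) : ℝ := p.1 * log (p.1 / p.2)

def mulLogDivDomain : Set (ℝ × ℝ) := {p | 0 ≤ p.1 ∧ 0 ≤ p.2 ∧ (p.2 = 0 → p.1 = 0)}

lemma convex_mulLogDivDomain : Convex ℝ mulLogDivDomain := by
  rintro p ⟨hp₁, hp₂, hp⟩ q ⟨hq₁, hq₂, hq⟩ a b ha hb -
  refine ⟨by simp only [Prod.fst_add, Prod.smul_fst, smul_eq_mul]; positivity,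
    by simp only [Prod.snd_add, Prod.smul_snd, smul_eq_mul]; positivity, fun h => ?_⟩
  simp only [Prod.fst_add, Prod.snd_add, Prod.smul_fst, Prod.smul_snd, smul_eq_mul] at h ⊢
  obtain ⟨hap, hbq⟩ := (add_eq_zero_iff_of_nonneg (by positivity) (by positivity)).1 h
  rcases mul_eq_zero.1 hap with rfl | hp0 <;> rcases mul_eq_zero.1 hbq with rfl | hq0 <;>
    simp [*]

theorem convexOn_mulLogDiv : ConvexOn ℝ mulLogDivDomain mulLogDiv := by
  refine convexOn_iff_forall_pos.2 ⟨convex_mulLogDivDomain, ?_⟩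
  rintro ⟨x, y⟩ ⟨hx, hy, hxy⟩ ⟨x', y'⟩ ⟨hx', hy', hxy'⟩ a b ha hb hab
  simp only [mulLogDiv, Prod.smul_mk, Prod.mk_add_mk, smul_eq_mul] at *
  rcases hy.eq_or_lt with rfl | hy
  · simp [hxy rfl, mul_log_div_mul_mul]
  rcases hy'.eq_or_lt with rfl | hy'
  · simp [hxy' rfl, mul_log_div_mul_mul]
  have perspective : ∀ u {v : ℝ}, 0 < v → u * log (u / v) = v * (u / v * log (u / v)) :=
    fun u v hv => by field_simp
  set s := a * y + b * y'
  have hs : 0 < s := by positivity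
  have hjensen := convexOn_mul_log.2 (Set.mem_Ici.2 (div_nonneg hx hy.le))
    (Set.mem_Ici.2 (div_nonneg hx' hy'.le)) (by positivity : 0 ≤ a * y / s)
    (by positivity : 0 ≤ b * y' / s) (by rw [← add_div]; exact div_self hs.ne')
  have hmean : a * y / s * (x / y) + b * y' / s * (x' / y') = (a * x + b * x') / s := by
    field_simp
  simp only [smul_eq_mul, hmean] at hjensen
  calc (a * x + b * x') * log ((a * x + b * x') / s)
      = s * ((a * x + b * x') / s * log ((a * x + b * x') / s)) := perspective _ hs
    _ ≤ s * (a * y / s * (x / y * log (x / y)) + b * y' / s * (x' / y' * log (x' / y'))) :=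
        mul_le_mul_of_nonneg_left hjensen hs.le
    _ = a * (x * log (x / y)) + b * (x' * log (x' / y')) := by
        rw [perspective x hy, perspective x' hy']; field_simp

theorem ConvexOn.finset_sum {𝕜 E β ι : Type*} [Semiring 𝕜] [PartialOrder 𝕜] [AddCommMonoid E]
    [AddCommMonoid β] [PartialOrder β] [IsOrderedAddMonoid β] [SMul 𝕜 E] [Module 𝕜 β]
    {s : Set E} (t : Finset ι) {f : ι → E → β} (hs : Convex 𝕜 s)
    (hf : ∀ i ∈ t, ConvexOn 𝕜 s (f i)) : ConvexOn 𝕜 s (fun x => ∑ i ∈ t, f i x) := by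
  classical
  induction t using Finset.induction_on with
  | empty => simpa using convexOn_const 0 hs
  | insert i t hi ih =>
    simp only [Finset.sum_insert hi]
    exact (hf i (mem_insert_self i t)).add (ih fun j hj => hf j (mem_insert_of_mem hj))

lemma hatQ_nonneg {α : Type} {Qt Q : α → ℝ} {κ : ℝ} (hκ0 : 0 ≤ κ) (hκ1 : κ ≤ 1) {e : α}
    (hQt : 0 ≤ Qt e) (hQ : 0 ≤ Q e) : 0 ≤ hatQ Qt κ Q e :=
  add_nonneg (mul_nonneg (sub_nonneg.2 hκ1) hQt) (mul_nonneg hκ0 hQ)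

lemma coe_homothety_eq_hatQ {α : Type} (Qt : α → ℝ) (κ : ℝ) :
    ⇑(AffineMap.homothety Qt κ) = hatQ Qt κ := by
  ext Q e
  simp only [AffineMap.homothety_apply, vsub_eq_sub, vadd_eq_add, Pi.add_apply, Pi.smul_apply,
    Pi.sub_apply, smul_eq_mul, hatQ]
  ring

section RowSum

variable {S : Type} [Fintype S] [DecidableEq S] (B : Finset (S × S))

noncomputable def rowSumLinearMap (i : S) : (S × S → ℝ) →ₗ[ℝ] ℝ where
  toFun Q := rowSum B Q i
  map_add' _ _ := sum_add_distrib
  map_smul' _ _ := (mul_sum _ _ _).symm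

lemma le_rowSum {Q : S × S → ℝ} (hQ : ∀ e ∈ B, 0 ≤ Q e) {e : S × S} (he : e ∈ B) :
    Q e ≤ rowSum B Q e.1 :=
  single_le_sum (f := fun j => Q (e.1, j)) (fun _ hj => hQ _ (mem_filter.1 hj).2)
    (mem_filter.2 ⟨mem_univ e.2, he⟩)

lemma sum_mul_eq_sum_rowSum_mul (Q : S × S → ℝ) (g : S → ℝ) :
    ∑ e ∈ B, Q e * g e.1 = ∑ i, rowSum B Q i * g i := by
  simp only [rowSum, sum_mul, sum_filter, ite_mul, zero_mul]
  rw [← Fintype.sum_prod_type', ← sum_filter, filter_univ_mem]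

end RowSum

section EdgeTerms

variable {S : Type} [Fintype S] [DecidableEq S] (B : Finset (S × S)) (Qt : S × S → ℝ) (κ : ℝ)

/-- The pair `(Q̂_{ij}, Q̃_{ij} μ̂_i / μ̃_i)`, affine in `Q`, whose `mulLogDiv` is the contribution of
the edge `e = (i, j)` to `ψ̄`. -/
noncomputable def edgeEntropyArgs (e : S × S) : (S × S → ℝ) →ᵃ[ℝ] ℝ × ℝ :=
  ((LinearMap.proj e).prod ((Qt e / rowSum B Qt e.1) • rowSumLinearMap B e.1)).toAffineMap.comp
    (AffineMap.homothety Qt κ)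

lemma edgeEntropyArgs_apply (e : S × S) (Q : S × S → ℝ) :
    edgeEntropyArgs B Qt κ e Q =
      (hatQ Qt κ Q e, Qt e * (rowSum B (hatQ Qt κ Q) e.1 / rowSum B Qt e.1)) := by
  simp only [edgeEntropyArgs, AffineMap.coe_comp, Function.comp_apply, coe_homothety_eq_hatQ]
  refine Prod.ext rfl ?_
  change Qt e / rowSum B Qt e.1 * rowSum B (hatQ Qt κ Q) e.1 = _
  ring

variable {B Qt}

lemma rowSum_pos (hQt : ∀ e ∈ B, 0 < Qt e) {e : S × S} (he : e ∈ B) : 0 < rowSum B Qt e.1 :=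
  (hQt e he).trans_le (le_rowSum B (fun e he => (hQt e he).le) he)

lemma edgeEntropyArgs_mem_mulLogDivDomain (hQt : ∀ e ∈ B, 0 < Qt e) {Q : S × S → ℝ}
    (hQ : ∀ e ∈ B, 0 ≤ hatQ Qt κ Q e) {e : S × S} (he : e ∈ B) :
    edgeEntropyArgs B Qt κ e Q ∈ mulLogDivDomain := by
  have hμ := rowSum_pos hQt he
  have hle := le_rowSum B hQ he
  rw [edgeEntropyArgs_apply]
  refine ⟨hQ e he, mul_nonneg (hQt e he).le (div_nonneg ((hQ e he).trans hle) hμ.le), fun h => ?_⟩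
  have hμ0 : rowSum B (hatQ Qt κ Q) e.1 = 0 := by
    simpa [(hQt e he).ne', hμ.ne'] using h
  exact le_antisymm (hμ0 ▸ hle) (hQ e he)

lemma psibar_eq_sum_edges (κ' : ℝ) (hQt : ∀ e ∈ B, 0 < Qt e) {Q : S × S → ℝ}
    (hQ : ∀ e ∈ B, 0 ≤ hatQ Qt κ Q e) :
    psibar B Qt κ κ' Q = κ' * ∑ e ∈ B, mulLogDiv (edgeEntropyArgs B Qt κ e Q) := by
  have hsplit : ∀ e ∈ B, mulLogDiv (edgeEntropyArgs B Qt κ e Q) =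
      hatQ Qt κ Q e * log (hatQ Qt κ Q e / Qt e) -
        hatQ Qt κ Q e * log (rowSum B (hatQ Qt κ Q) e.1 / rowSum B Qt e.1) := by
    intro e he
    have hμ := rowSum_pos hQt he
    have hle := le_rowSum B hQ he
    rw [mulLogDiv, edgeEntropyArgs_apply]
    refine mul_log_div_mul (hQt e he).ne' fun hx => div_ne_zero ?_ hμ.ne'
    exact ((lt_of_le_of_ne (hQ e he) (Ne.symm hx)).trans_le hle).ne'
  rw [psibar, sum_congr rfl hsplit, sum_sub_distrib, sum_mul_eq_sum_rowSum_mul B _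
    (fun i => log (rowSum B (hatQ Qt κ Q) i / rowSum B Qt i))]

end EdgeTerms

theorem psibar_convexOn_general {S : Type} [Fintype S] [DecidableEq S] (B : Finset (S × S))
    (Qt : S × S → ℝ) (hQtpos : ∀ e ∈ B, 0 < Qt e)
    (κ κ' : ℝ) (hκ0 : 0 < κ) (hκ1 : κ ≤ 1) (hκ' : 0 < κ') :
    ConvexOn ℝ {Q : S × S → ℝ | (∀ e ∈ B, 0 ≤ Q e) ∧ ∀ e ∉ B, Q e = 0}
      (psibar B Qt κ κ') := by
  set D := {Q : S × S → ℝ | (∀ e ∈ B, 0 ≤ Q e) ∧ ∀ e ∉ B, Q e = 0}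
  have hD : Convex ℝ D := fun Q hQ R hR a b ha hb _ =>
    ⟨fun e he => add_nonneg (mul_nonneg ha (hQ.1 e he)) (mul_nonneg hb (hR.1 e he)),
      fun e he => by simp [hQ.2 e he, hR.2 e he]⟩
  have hhatQ : ∀ Q ∈ D, ∀ e ∈ B, 0 ≤ hatQ Qt κ Q e := fun Q hQ e he =>
    hatQ_nonneg hκ0.le hκ1 (hQtpos e he).le (hQ.1 e he)
  refine ((ConvexOn.finset_sum B hD fun e he => ?_).smul hκ'.le).congr fun Q hQ =>
    (psibar_eq_sum_edges κ κ' hQtpos (hhatQ Q hQ)).symm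
  exact (convexOn_mulLogDiv.comp_affineMap _).subset
    (fun Q hQ => edgeEntropyArgs_mem_mulLogDivDomain κ hQtpos (hhatQ Q hQ) he) hD

/-- The surrogate penalty function `ψ̄_{Q̃}` is convex on the set of
edge measures `Q` that are nonnegative on `B` and vanish off `B`. -/
theorem psibar_convexOn {S : Type} [Fintype S] [DecidableEq S] (B : Finset (S × S))
    (hB : ∀ i : S, ∃ j : S, (i, j) ∈ B)
    (Qt : S × S → ℝ) (hQtoff : ∀ e ∉ B, Qt e = 0) (hQtpos : ∀ e ∈ B, 0 < Qt e)
    (κ κ' : ℝ) (hκ0 : 0 < κ) (hκ1 : κ ≤ 1) (hκ' : 0 < κ') :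
    ConvexOn ℝ {Q : S × S → ℝ | (∀ e ∈ B, 0 ≤ Q e) ∧ ∀ e ∉ B, Q e = 0}
      (psibar B Qt κ κ') :=
  psibar_convexOn_general B Qt hQtpos κ κ' hκ0 hκ1 hκ'
end

section
/- Let θ̃ ∈ ℝ and let Q : ℝ → (S × S → ℝ) be a parameterized family such that Q(θ) vanishes off B for every θ, each coordinate θ ↦ Q_{ij}(θ) is differentiable at θ̃, and Q(θ̃) = Q̃. Then the composite function θ ↦ ψ̄_{Q̃}(Q(θ)) is differentiable at θ̃ and its derivative at θ̃ equals 0. -/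
open Finset

/-!
Both sums in `ψ̄` are built from `x ↦ x · log (x / c)`, whose derivative at `x = c` is
`log 1 + 1 = 1`. At the operating point every `Q̂_{ij}` equals `Q̃_{ij}` and every `μ̂_i`
equals `μ̃_i`, so to first order each sum moves exactly like its arguments: the edge sum
like `Σ_{(i,j) ∈ B} Q̂_{ij}` and the row sum like `Σ_i μ̂_i`. These are the same quantity,
so the two first-order changes cancel.
-/

theorem hasDerivAt_mul_log_div_self {c : ℝ} (hc : 0 < c) :
    HasDerivAt (fun x : ℝ => x * Real.log (x / c)) 1 c := by
  have hlog : HasDerivAt (fun x : ℝ => Real.log (x / c)) ((c / c)⁻¹ * (1 / c)) c :=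
    (Real.hasDerivAt_log (by positivity)).comp c ((hasDerivAt_id c).div_const c)
  exact ((hasDerivAt_id' c).mul hlog).congr_deriv (by simp [hc.ne'])

theorem HasDerivAt.mul_log_div_of_eq {f : ℝ → ℝ} {f' c t : ℝ} (hf : HasDerivAt f f' t)
    (hft : f t = c) (hc : 0 < c) :
    HasDerivAt (fun θ => f θ * Real.log (f θ / c)) f' t := by
  subst hft
  have h := (hasDerivAt_mul_log_div_self hc).comp t hf
  rw [one_mul] at h
  exact h

section RowSum

variable {S : Type} [Fintype S] [DecidableEq S] (B : Finset (S × S))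

theorem sum_rowSum (Q : S × S → ℝ) : ∑ i, rowSum B Q i = ∑ e ∈ B, Q e := by
  simp only [rowSum, Finset.sum_filter]
  rw [← Fintype.sum_prod_type (fun e : S × S => if e ∈ B then Q e else 0),
    Finset.sum_ite_mem, Finset.univ_inter]

variable {B} in
theorem rowSum_pos_s4 (hB : ∀ i : S, ∃ j : S, (i, j) ∈ B) {Q : S × S → ℝ}
    (hQ : ∀ e ∈ B, 0 < Q e) (i : S) : 0 < rowSum B Q i := by
  obtain ⟨j, hj⟩ := hB i
  exact Finset.sum_pos (fun j hj => hQ _ (Finset.mem_filter.mp hj).2)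
    ⟨j, Finset.mem_filter.mpr ⟨Finset.mem_univ j, hj⟩⟩

theorem hasDerivAt_rowSum {Q : ℝ → S × S → ℝ} {Q' : S × S → ℝ} {t : ℝ}
    (hQ : ∀ e, HasDerivAt (fun θ => Q θ e) (Q' e) t) (i : S) :
    HasDerivAt (fun θ => rowSum B (Q θ) i) (rowSum B Q' i) t :=
  HasDerivAt.fun_sum fun j _ => hQ (i, j)

end RowSum

theorem hatQ_self {α : Type} (Qt : α → ℝ) (κ : ℝ) : hatQ Qt κ Qt = Qt := by
  ext e
  simp only [hatQ]
  ring

theorem hasDerivAt_hatQ {α : Type} (Qt : α → ℝ) (κ : ℝ) {Q : ℝ → α → ℝ} {Q' : α → ℝ}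
    {t : ℝ} (hQ : ∀ e, HasDerivAt (fun θ => Q θ e) (Q' e) t) (e : α) :
    HasDerivAt (fun θ => hatQ Qt κ (Q θ) e) (κ * Q' e) t :=
  ((hQ e).const_mul κ).const_add ((1 - κ) * Qt e)

theorem psibar_deriv_zero_at_operating_point_general {S : Type} [Fintype S] [DecidableEq S]
    (B : Finset (S × S)) (hB : ∀ i : S, ∃ j : S, (i, j) ∈ B)
    (Qt : S × S → ℝ) (hQtpos : ∀ e ∈ B, 0 < Qt e)
    (κ κ' : ℝ)
    (θt : ℝ) (Qf : ℝ → S × S → ℝ)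
    (hdiff : ∀ e : S × S, DifferentiableAt ℝ (fun θ => Qf θ e) θt)
    (hQft : Qf θt = Qt) :
    HasDerivAt (fun θ => psibar B Qt κ κ' (Qf θ)) 0 θt := by
  set U' : S × S → ℝ := fun e => κ * deriv (fun θ => Qf θ e) θt
  have hU : ∀ e, HasDerivAt (fun θ => hatQ Qt κ (Qf θ) e) (U' e) θt :=
    hasDerivAt_hatQ Qt κ fun e => (hdiff e).hasDerivAt
  have hUt : hatQ Qt κ (Qf θt) = Qt := by rw [hQft, hatQ_self]
  have hedges : HasDerivAt (fun θ => ∑ e ∈ B,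
      hatQ Qt κ (Qf θ) e * Real.log (hatQ Qt κ (Qf θ) e / Qt e)) (∑ e ∈ B, U' e) θt :=
    HasDerivAt.fun_sum fun e he => (hU e).mul_log_div_of_eq (congrFun hUt e) (hQtpos e he)
  have hrows : HasDerivAt (fun θ => ∑ i, rowSum B (hatQ Qt κ (Qf θ)) i *
      Real.log (rowSum B (hatQ Qt κ (Qf θ)) i / rowSum B Qt i)) (∑ i, rowSum B U' i) θt :=
    HasDerivAt.fun_sum fun i _ =>
      (hasDerivAt_rowSum B hU i).mul_log_div_of_eq (by rw [hUt]) (rowSum_pos_s4 hB hQtpos i)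
  have h := (hedges.sub hrows).const_mul κ'
  rw [sum_rowSum, sub_self, mul_zero] at h
  exact h

/-- Along any parameterized family `θ ↦ Q(θ)` of edge measures
vanishing off `B`, with each coordinate differentiable at `θ̃` and `Q(θ̃) = Q̃`, the
composite `θ ↦ ψ̄_{Q̃}(Q(θ))` is differentiable at `θ̃` with derivative `0`. -/
theorem psibar_deriv_zero_at_operating_point {S : Type} [Fintype S] [DecidableEq S]
    (B : Finset (S × S)) (hB : ∀ i : S, ∃ j : S, (i, j) ∈ B)
    (Qt : S × S → ℝ) (hQtoff : ∀ e ∉ B, Qt e = 0) (hQtpos : ∀ e ∈ B, 0 < Qt e)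
    (κ κ' : ℝ) (hκ0 : 0 < κ) (hκ1 : κ ≤ 1) (hκ' : 0 < κ')
    (θt : ℝ) (Qf : ℝ → S × S → ℝ)
    (hoff : ∀ θ : ℝ, ∀ e ∉ B, Qf θ e = 0)
    (hdiff : ∀ e : S × S, DifferentiableAt ℝ (fun θ => Qf θ e) θt)
    (hQft : Qf θt = Qt) :
    HasDerivAt (fun θ => psibar B Qt κ κ' (Qf θ)) 0 θt :=
  psibar_deriv_zero_at_operating_point_general B hB Qt hQtpos κ κ' θt Qf hdiff hQft
end
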